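/- Let (X,r) be a finite left non-degenerate idempotent solution. Then X = ⋃_{u∈Λ} X_u is a disjoint union and |X_u| = |X_v| for all u,v ∈ Λ; in particular |Λ| divides |X|. -/

import Mathlib

open Function

variable {X : Type*}

def lam (r : X × X → X × X) (x y : X) : X := (r (x, y)).1

def rho (r : X × X → X × X) (y x : X) : X := (r (x, y)).2

/-- `r × id` acting on triples. -/
def rl (r : X × X → X × X) : X × X × X → X × X × X :=
  fun p => ((r (p.1, p.2.1)).1, (r (p.1, p.2.1)).2, p.2.2)

/-- `id × r` acting on triples. -/
def rr (r : X × X → X × X) : X × X × X → X × X × X :=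
  fun p => (p.1, r (p.2.1, p.2.2))

/-- the Yang–Baxter (braid) equation for a set-theoretic map. -/
def YB (r : X × X → X × X) : Prop :=
  rl r ∘ rr r ∘ rl r = rr r ∘ rl r ∘ rr r

/-- the relation `x + y = y + y` on the free monoid. -/
def simpleRel (X : Type*) : FreeMonoid X → FreeMonoid X → Prop :=
  fun a b => ∃ x y : X, a = FreeMonoid.of x * FreeMonoid.of y ∧
    b = FreeMonoid.of y * FreeMonoid.of y

/-- the derived structure monoid `A(X,r)` of a left non-degenerate idempotent solution. -/
abbrev DerMon (X : Type*) := (conGen (simpleRel X)).Quotient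

def dof (x : X) : DerMon X := (conGen (simpleRel X)).mk' (FreeMonoid.of x)

/-- the diagonal map `q(x) = λ_x⁻¹(x)`. -/
def qmap (L : DerMon X → Equiv.Perm X) (x : X) : X := (L (dof x))⁻¹ x

/-- the product of the structure semigroup realised on pairs `(a, λ_a)`. -/
def sop (L : DerMon X → Equiv.Perm X) (act : Equiv.Perm X → DerMon X →* DerMon X)
    (a b : DerMon X) : DerMon X := a * act (L a) b

/-- the component `S_u = {(a,λ_a) : λ_a⁻¹(a) = |a|·u}`. -/
def Su (L : DerMon X → Equiv.Perm X) (act : Equiv.Perm X → DerMon X →* DerMon X)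
    (len : DerMon X → ℕ) (u : X) : Set (DerMon X) :=
  {a | a ≠ 1 ∧ act (L a)⁻¹ a = dof u ^ len a}

/-- `X_u = {x ∈ X : λ_{dx}(u) = x}`. -/
def Xu (L : DerMon X → Equiv.Perm X) (d : ℕ) (u : X) : Set X :=
  {x | L (dof x ^ d) u = x}

lemma dof_mul_dof (x y : X) : dof x * dof y = dof y * dof y := by
  show (conGen (simpleRel X)).mk' _ * (conGen (simpleRel X)).mk' _
      = (conGen (simpleRel X)).mk' _ * (conGen (simpleRel X)).mk' _
  rw [← map_mul, ← map_mul]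
  exact (Con.eq _).mpr (ConGen.Rel.of _ _ ⟨x, y, rfl, rfl⟩)

lemma dof_mul_pow (x y : X) (n : ℕ) : dof x * dof y ^ (n + 1) = dof y ^ (n + 2) := by
  calc dof x * dof y ^ (n+1) = (dof x * dof y) * dof y ^ n := by rw [pow_succ', mul_assoc]
    _ = (dof y * dof y) * dof y ^ n := by rw [dof_mul_dof]
    _ = dof y ^ (n+2) := by rw [mul_assoc, ← pow_succ', ← pow_succ']

lemma dof_pow_mul_pow (x y : X) (n m : ℕ) :
    dof x ^ n * dof y ^ (m + 1) = dof y ^ (n + (m + 1)) := by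
  induction n with
  | zero => simp
  | succ n ih =>
    have h1 : n + 1 + (m + 1) = (n + m + 1) + 1 := by omega
    have h2 : n + (m + 1) = (n + m) + 1 := by omega
    rw [h1, pow_succ', mul_assoc, ih, h2, dof_mul_pow]

/-- `X = ⋃_{u∈Λ} X_u` is a disjoint union and `|X_u| = |X_v|` for all `u,v ∈ Λ`;
in particular `|Λ|` divides `|X|`. -/
theorem statement13
    {X : Type*} [Fintype X] (r : X × X → X × X) (hYB : YB r) (hidem : r ∘ r = r)
    (L : DerMon X → Equiv.Perm X)
    (hLx : ∀ x y : X, L (dof x) y = lam r x y)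
    (hL1 : L 1 = 1)
    (act : Equiv.Perm X → DerMon X →* DerMon X)
    (hact : ∀ (f : Equiv.Perm X) (x : X), act f (dof x) = dof (f x))
    (hact1 : ∀ a : DerMon X, act 1 a = a)
    (hactmul : ∀ (f g : Equiv.Perm X) (a : DerMon X), act (f * g) a = act f (act g a))
    (len : DerMon X → ℕ)
    (hlenmul : ∀ a b : DerMon X, len (a * b) = len a + len b)
    (hlenof : ∀ x : X, len (dof x) = 1)
    (hcoc : ∀ a b : DerMon X, L (a * act (L a) b) = L a * L b)
    (d : ℕ) (hd : 0 < d) (hdexp : ∀ a : DerMon X, L a ^ d = 1)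
    :
    (∀ x : X, ∃! u : X, u ∈ Set.range (qmap L) ∧ x ∈ Xu L d u) ∧
    (∀ u ∈ Set.range (qmap L), ∀ v ∈ Set.range (qmap L),
      Nat.card (Xu L d u) = Nat.card (Xu L d v)) ∧
    Nat.card (Set.range (qmap L)) ∣ Nat.card X := by
  obtain ⟨m, rfl⟩ : ∃ m, d = m + 1 := ⟨d - 1, (Nat.succ_pred_eq_of_pos hd).symm⟩
  clear hd
  set d := m + 1 with hdm
  -- basic: L (a * b) = L a * L (act (L a)⁻¹ b)
  have hL2 : ∀ a b : DerMon X, L (a * b) = L a * L (act (L a)⁻¹ b) := by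
    intro a b
    have h := hcoc a (act (L a)⁻¹ b)
    rwa [← hactmul, mul_inv_cancel, hact1] at h
  have hact_pow : ∀ (f : Equiv.Perm X) (x : X) (n : ℕ),
      act f (dof x ^ n) = dof (f x) ^ n := by
    intro f x n; rw [map_pow, hact]
  -- recursion for μ_n(x) = L (dof x ^ n)
  have hμ : ∀ (x : X) (n : ℕ),
      L (dof x ^ (n + 1)) = L (dof x ^ n) * L (dof ((L (dof x ^ n))⁻¹ x)) := by
    intro x n
    rw [pow_succ, hL2, hact]
  -- (L (dof x ^ n))⁻¹ x = q^[n] x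
  have hiter : ∀ (n : ℕ) (x : X), (L (dof x ^ n))⁻¹ x = (qmap L)^[n] x := by
    intro n
    induction n with
    | zero => intro x; simp [hL1]
    | succ n ih =>
      intro x
      rw [iterate_succ_apply', ← ih, hμ x n, mul_inv_rev, Equiv.Perm.mul_apply]
      rfl
  -- peeling from the left
  have hstar : ∀ (x y : X) (n : ℕ),
      L (dof y ^ (n + 2)) = L (dof x) * L (dof ((L (dof x))⁻¹ y) ^ (n + 1)) := by
    intro x y n
    rw [← dof_mul_pow x y n, hL2, hact_pow]
  have hpeel : ∀ (n : ℕ) (x z : X),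
      (qmap L)^[n + 2] (L (dof x) z) = (qmap L)^[n + 1] z := by
    intro n x z
    rw [← hiter (n + 2) (L (dof x) z), hstar x (L (dof x) z) n, mul_inv_rev,
      Equiv.Perm.mul_apply, (show (L (dof x))⁻¹ (L (dof x) z) = z from Equiv.symm_apply_apply _ _), hiter]
  have hlam_pow : ∀ x : X, L (dof x) ^ d = 1 := fun x => hdexp (dof x)
  -- q^[d] z = q (λ_x z) for every x
  have key : ∀ (k : ℕ) (x w : X),
      (qmap L)^[k + 1] (((L (dof x)) ^ k) w) = qmap L w := by
    intro k
    induction k with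
    | zero => intro x w; simp
    | succ k ih =>
      intro x w
      rw [pow_succ', Equiv.Perm.mul_apply, hpeel k x _, ih]
  have hqd : ∀ (x z : X), (qmap L)^[d] z = qmap L (L (dof x) z) := by
    intro x z
    have h := key m x ((L (dof x)) z)
    have e1 : ((L (dof x)) ^ m) ((L (dof x)) z) = z := by
      rw [← Equiv.Perm.mul_apply, ← pow_succ, hlam_pow x]; rfl
    rwa [e1] at h
  -- membership
  have hmem : ∀ u x : X, x ∈ Xu L d u ↔ u = (qmap L)^[d] x := by
    intro u x
    constructor
    · intro h
      rw [← hiter d x, Equiv.Perm.eq_inv_iff_eq]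
      exact h
    · intro h
      show L (dof x ^ d) u = x
      rw [h, ← hiter d x]
      simp
  have hrange : ∀ x : X, (qmap L)^[d] x ∈ Set.range (qmap L) := by
    intro x
    exact ⟨(qmap L)^[m] x, (iterate_succ_apply' (qmap L) m x).symm⟩
  have hfix : ∀ v ∈ Set.range (qmap L), (qmap L)^[d] v = v := by
    rintro _ ⟨b, rfl⟩
    rw [hqd b (qmap L b)]
    have : L (dof b) (qmap L b) = b := by
      show L (dof b) ((L (dof b))⁻¹ b) = b
      simp
    rw [this]
  -- lemA : q^[d] (μ_d(x) w) = q^[d] w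
  have keyA : ∀ (k : ℕ) (x w : X),
      (qmap L)^[k + 1] (L (dof x ^ (k + 1)) w) = (qmap L)^[d] w := by
    intro k
    induction k with
    | zero => intro x w; rw [pow_one]; exact (hqd x w).symm
    | succ k ih =>
      intro k_x w
      rw [hstar k_x k_x k, Equiv.Perm.mul_apply, hpeel, ih]
  have lemA : ∀ x w : X, (qmap L)^[d] (L (dof x ^ d) w) = (qmap L)^[d] w :=
    fun x w => keyA m x w
  -- lemB : μ_d invariance
  have lemB : ∀ x v : X, (qmap L)^[d] v = v →
      L (dof (L (dof x ^ d) v) ^ d) = L (dof x ^ d) := by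
    intro x v hv
    have hco : L (dof x ^ d * act (L (dof x ^ d)) (dof v ^ d)) =
        L (dof x ^ d) * L (dof v ^ d) := hcoc _ _
    rw [hact_pow, dof_pow_mul_pow] at hco
    -- now L (dof w ^ (d + d)) where w = L (dof x ^ d) v
    set w := L (dof x ^ d) v with hw
    have h2 : L (dof w ^ (d + d)) = L (dof w ^ d) * L (dof ((qmap L)^[d] w) ^ d) := by
      rw [pow_add, hL2, hact_pow, hiter]
    have h3 : (qmap L)^[d] w = v := by rw [hw, lemA, hv]
    rw [h3] at h2
    have := hco.symm.trans h2
    exact mul_right_cancel this.symm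
  refine ⟨?_, ?_, ?_⟩
  · -- part 1
    intro x
    refine ⟨(qmap L)^[d] x, ⟨hrange x, (hmem _ x).mpr rfl⟩, ?_⟩
    rintro u ⟨-, hu⟩
    exact (hmem u x).mp hu
  · -- part 2
    intro u hu v hv
    have hu' := hfix u hu
    have hv' := hfix v hv
    refine Nat.card_congr ?_
    refine ⟨fun p => ⟨L (dof (p : X) ^ d) v, ?_⟩, fun p => ⟨L (dof (p : X) ^ d) u, ?_⟩, ?_, ?_⟩
    · exact (hmem v _).mpr (by rw [lemA, hv'])
    · exact (hmem u _).mpr (by rw [lemA, hu'])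
    · rintro ⟨x, hx⟩
      apply Subtype.ext
      show L (dof (L (dof x ^ d) v) ^ d) u = x
      rw [lemB x v hv']
      exact hx
    · rintro ⟨y, hy⟩
      apply Subtype.ext
      show L (dof (L (dof y ^ d) u) ^ d) v = y
      rw [lemB y u hu']
      exact hy
  · -- part 3
    rcases isEmpty_or_nonempty X with hE | hNE
    · have : Nat.card X = 0 := by simp
      simp [this]
    · obtain ⟨x₀⟩ := hNE
      set u₀ := (qmap L)^[d] x₀ with hu₀def
      have hu₀ : u₀ ∈ Set.range (qmap L) := hrange x₀
      have hfix₀ : (qmap L)^[d] u₀ = u₀ := hfix u₀ hu₀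
      have e : (Set.range (qmap L)) × (Xu L d u₀) ≃ X := by
        refine ⟨fun p => L (dof (p.2 : X) ^ d) (p.1 : X),
          fun z => (⟨(qmap L)^[d] z, hrange z⟩,
            ⟨L (dof z ^ d) u₀, (hmem u₀ _).mpr (by rw [lemA, hfix₀])⟩), ?_, ?_⟩
        · rintro ⟨⟨u, hu⟩, ⟨x, hx⟩⟩
          have hufix := hfix u hu
          have h1 : (qmap L)^[d] (L (dof x ^ d) u) = u := by rw [lemA, hufix]
          refine Prod.ext (Subtype.ext h1) (Subtype.ext ?_)
          show L (dof (L (dof x ^ d) u) ^ d) u₀ = x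
          rw [lemB x u hufix]
          exact hx
        · intro z
          show L (dof (L (dof z ^ d) u₀) ^ d) ((qmap L)^[d] z) = z
          rw [lemB z u₀ hfix₀, ← hiter d z]
          simp
      have hcard : Nat.card X = Nat.card (Set.range (qmap L)) * Nat.card (Xu L d u₀) := by
        rw [← Nat.card_congr e, Nat.card_prod]
      exact ⟨Nat.card (Xu L d u₀), hcard⟩
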